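/- arXiv:2206.09662 — 2 statements merged into one kernel-verified Lean document; each statement's English description precedes it below -/
import Mathlib

section
/- Let G be a multigraph, f a divisor on G, and k ≥ 1 an integer. If there is a legal game starting from f in which every vertex fires exactly k times, then there is a legal game starting from f in which every vertex fires exactly once. -/
/-! The once-each game is `L.dedup`, which fires the vertices in the order of their last firing
in `L`. Chips at `v` depend only on how often each vertex has fired. Just before the last firing of
`v` in `L`, the vertex `v` has fired `k - 1` times, each vertex that follows `v` in `L.dedup` at
most `k - 1` times, and each vertex preceding it at most `k` times. So every neighbour has fired at
most `k - 1` times more than in the prefix of `L.dedup` before `v`, while `v` has fired exactly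
`k - 1` times more; since a firing of `v` costs it at least as many chips as one firing of each
other vertex brings it, `v` has at least as many chips in `L.dedup` as it had at that legal
moment in `L`. -/

variable {V : Type*} [Fintype V] [DecidableEq V]

/-- The degree of vertex `v` in the multigraph with edge-multiplicity function `m`. -/
def mgDeg (m : V → V → ℕ) (v : V) : ℕ := ∑ u, m v u

/-- The divisor obtained from `f` by firing vertex `v`. -/
def mgFire (m : V → V → ℕ) (f : V → ℤ) (v : V) : V → ℤ :=
  fun u => if u = v then f v - mgDeg m v else f u + m v u

/-- The divisor obtained from `f` by firing the vertices of `L` in order. -/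
def mgPlay (m : V → V → ℕ) (f : V → ℤ) (L : List V) : V → ℤ :=
  L.foldl (mgFire m) f

/-- `L` is a legal game from `f`: each fired vertex is active when fired. -/
def mgLegal (m : V → V → ℕ) : (V → ℤ) → List V → Prop
  | _, [] => True
  | f, v :: L => ((mgDeg m v : ℤ) ≤ f v) ∧ mgLegal m (mgFire m f v) L

/-- A divisor is stable if no vertex is active. -/
def mgStable (m : V → V → ℕ) (f : V → ℤ) : Prop := ∀ v, f v < (mgDeg m v : ℤ)

/-- A divisor is halting if some legal game from it ends at a stable divisor. -/
def mgHalting (m : V → V → ℕ) (f : V → ℤ) : Prop :=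
  ∃ L : List V, mgLegal m f L ∧ mgStable m (mgPlay m f L)

/-- A divisor is recurrent if some non-empty legal game from it leads back to it. -/
def mgRecurrent (m : V → V → ℕ) (f : V → ℤ) : Prop :=
  ∃ L : List V, L ≠ [] ∧ mgLegal m f L ∧ mgPlay m f L = f

/-- A divisor is effective if it is nonnegative everywhere. -/
def mgEffective (f : V → ℤ) : Prop := ∀ v, 0 ≤ f v

/-- The degree of a divisor. -/
def mgDegDiv (f : V → ℤ) : ℤ := ∑ v, f v

/-- Distance of a divisor from a recurrent state. -/
noncomputable def mgDistRec (m : V → V → ℕ) (f : V → ℤ) : ℕ :=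
  sInf {n : ℕ | ∃ g : V → ℤ, mgEffective g ∧ mgDegDiv g = (n : ℤ) ∧ mgRecurrent m (f + g)}

/-- Distance of a divisor from a non-halting state. -/
noncomputable def mgDistNonhalt (m : V → V → ℕ) (f : V → ℤ) : ℕ :=
  sInf {n : ℕ | ∃ g : V → ℤ, mgEffective g ∧ mgDegDiv g = (n : ℤ) ∧ ¬ mgHalting m (f + g)}

/-- A multigraph is connected if any two vertices are joined by a path of
positive-multiplicity edges. -/
def mgConnected (m : V → V → ℕ) : Prop :=
  ∀ u v : V, Relation.ReflTransGen (fun a b => 0 < m a b) u v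

/-- `f` and `g` are linearly equivalent: `f` can be transformed to `g` by firings. -/
def mgLinEquiv (m : V → V → ℕ) (f g : V → ℤ) : Prop :=
  ∃ L : List V, mgPlay m f L = g

/-- A divisor is winnable if it is linearly equivalent to an effective divisor. -/
def mgWinnable (m : V → V → ℕ) (f : V → ℤ) : Prop :=
  ∃ g : V → ℤ, mgEffective g ∧ mgLinEquiv m f g

/-- The rank of a divisor. -/
noncomputable def mgRank (m : V → V → ℕ) (f : V → ℤ) : ℤ :=
  ((sInf {n : ℕ | ∃ g : V → ℤ, mgEffective g ∧ mgDegDiv g = (n : ℤ) ∧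
    ¬ mgWinnable m (f - g)} : ℕ) : ℤ) - 1


open Finset

section Chips

variable (m : V → V → ℕ)

theorem mgPlay_cons (f : V → ℤ) (x : V) (L : List V) :
    mgPlay m f (x :: L) = mgPlay m (mgFire m f x) L := rfl

-- A loop at `v` never returns chips to `v`, hence the sum over `u ≠ v` only.
theorem mgPlay_apply (f : V → ℤ) (L : List V) (v : V) :
    mgPlay m f L v = f v + ∑ u ∈ univ.erase v, (L.count u : ℤ) * m u v
      - L.count v * mgDeg m v := by
  induction L generalizing f with
  | nil => simp [mgPlay]
  | cons x L ih =>
    rw [mgPlay_cons, ih]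
    rcases eq_or_ne x v with rfl | hxv
    · have hsum : ∀ u ∈ univ.erase x, ((x :: L).count u : ℤ) * m u x = L.count u * m u x :=
        fun u hu => by simp [(ne_of_mem_erase hu).symm]
      rw [sum_congr rfl hsum]
      simp [mgFire]
      ring
    · have hsum : ∑ u ∈ univ.erase v, ((x :: L).count u : ℤ) * m u v
          = ∑ u ∈ univ.erase v, (L.count u : ℤ) * m u v + m x v := by
        simp only [List.count_cons, beq_iff_eq, Nat.cast_add, add_mul, sum_add_distrib,
          Nat.cast_ite, Nat.cast_one, Nat.cast_zero, ite_mul, one_mul, zero_mul]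
        rw [sum_ite_eq, if_pos (mem_erase.2 ⟨hxv, mem_univ x⟩)]
      rw [hsum, List.count_cons_of_ne hxv]
      simp only [mgFire, if_neg hxv.symm]
      ring

theorem mgLegal_iff_forall_eq_append_cons (f : V → ℤ) (L : List V) :
    mgLegal m f L ↔ ∀ A v B, L = A ++ v :: B → (mgDeg m v : ℤ) ≤ mgPlay m f A v := by
  induction L generalizing f with
  | nil => simp [mgLegal]
  | cons x L ih =>
    simp only [mgLegal, ih, List.cons_eq_append_iff]
    constructor
    · rintro ⟨hx, hL⟩ A v B (⟨rfl, hB⟩ | ⟨A, rfl, hA⟩)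
      · obtain ⟨rfl, rfl⟩ := List.cons_eq_cons.1 hB
        exact hx
      · exact hL A v B hA
    · intro h
      exact ⟨h [] x L (.inl ⟨rfl, rfl⟩),
        fun A v B hA => h (x :: A) v B (.inr ⟨A, rfl, hA⟩)⟩

theorem mgPlay_apply_le_of_count (hsymm : ∀ u v, m u v = m v u) (f : V → ℤ) {P A : List V}
    {v : V} (hv : A.count v ≤ P.count v)
    (hcount : ∀ u ≠ v, P.count u + A.count v ≤ P.count v + A.count u) :
    mgPlay m f P v ≤ mgPlay m f A v := by
  set j : ℤ := P.count v - A.count v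
  have hj : 0 ≤ j := sub_nonneg.2 (by exact_mod_cast hv)
  have hneighbours : ∑ u ∈ univ.erase v, (m u v : ℤ) ≤ mgDeg m v := by
    simp only [hsymm _ v, mgDeg]
    exact_mod_cast sum_le_sum_of_subset (erase_subset v univ)
  have hexcess : ∑ u ∈ univ.erase v, ((P.count u : ℤ) - A.count u) * m u v
      ≤ j * mgDeg m v :=
    calc ∑ u ∈ univ.erase v, ((P.count u : ℤ) - A.count u) * m u v
        ≤ ∑ u ∈ univ.erase v, j * m u v := by
          refine sum_le_sum fun u hu => mul_le_mul_of_nonneg_right ?_ (by positivity)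
          have := hcount u (ne_of_mem_erase hu)
          omega
      _ ≤ j * mgDeg m v := by
          rw [← mul_sum]
          exact mul_le_mul_of_nonneg_left hneighbours hj
  simp only [sub_mul, sum_sub_distrib] at hexcess
  rw [mgPlay_apply, mgPlay_apply]
  linarith

end Chips

/-- `List.dedup` keeps the last occurrence of each entry. -/
theorem List.exists_eq_append_cons_of_dedup_eq {α : Type*} [DecidableEq α] {L A B : List α}
    {v : α} (h : L.dedup = A ++ v :: B) :
    ∃ P Q, L = P ++ v :: Q ∧ v ∉ Q ∧ Q.dedup = B := by
  induction L generalizing A with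
  | nil => simp at h
  | cons x L ih =>
    by_cases hx : x ∈ L
    · rw [List.dedup_cons_of_mem hx] at h
      obtain ⟨P, Q, rfl, hvQ, hQ⟩ := ih h
      exact ⟨x :: P, Q, rfl, hvQ, hQ⟩
    · rw [List.dedup_cons_of_notMem hx] at h
      rcases A with _ | ⟨a, A⟩
      · obtain ⟨rfl, rfl⟩ := List.cons_eq_cons.1 h
        exact ⟨[], L, rfl, hx, rfl⟩
      · obtain ⟨P, Q, rfl, hvQ, hQ⟩ := ih (List.cons_eq_cons.1 h).2
        exact ⟨x :: P, Q, rfl, hvQ, hQ⟩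

theorem stmt5_general (m : V → V → ℕ) (hsymm : ∀ u v, m u v = m v u)
    (f : V → ℤ) (k : ℕ) (hk : 1 ≤ k) (L : List V)
    (hL : mgLegal m f L) (hcount : ∀ v : V, L.count v = k) :
    ∃ L' : List V, mgLegal m f L' ∧ ∀ v : V, L'.count v = 1 := by
  have hmem : ∀ v, v ∈ L.dedup := fun v =>
    List.mem_dedup.2 (List.count_pos_iff.1 (by rw [hcount v]; omega))
  refine ⟨L.dedup, ?_, fun v => List.count_eq_one_of_mem L.nodup_dedup (hmem v)⟩
  refine (mgLegal_iff_forall_eq_append_cons m f _).2 fun A v B hsplit => ?_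
  obtain ⟨P, Q, hPQ, hvQ, hQ⟩ := List.exists_eq_append_cons_of_dedup_eq hsplit
  have hnodup : (A ++ v :: B).Nodup := hsplit ▸ L.nodup_dedup
  have hvA : A.count v = 0 := List.count_eq_zero.2 fun hv =>
    List.disjoint_of_nodup_append hnodup hv List.mem_cons_self
  have hcountP : ∀ u, P.count u + (v :: Q).count u = k := by
    simpa [hPQ, List.count_append] using hcount
  have hlast : (mgDeg m v : ℤ) ≤ mgPlay m f P v :=
    (mgLegal_iff_forall_eq_append_cons m f L).1 hL P v Q hPQ
  refine hlast.trans (mgPlay_apply_le_of_count m hsymm f (by omega) fun u hu => ?_)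
  have hPv := hcountP v
  have hPu := hcountP u
  simp only [List.count_cons_self, List.count_eq_zero.2 hvQ, List.count_cons_of_ne hu.symm]
    at hPv hPu
  rcases List.mem_append.1 (hsplit ▸ hmem u) with huA | huB
  · have := List.count_eq_one_of_mem hnodup.of_append_left huA
    omega
  · have huQ : u ∈ Q := List.mem_dedup.1 (hQ ▸ (List.mem_cons.1 huB).resolve_left hu)
    have := List.count_pos_iff.2 huQ
    omega

/-- If there is a legal game from `f` in which every vertex fires exactly `k`
times (`k ≥ 1`), then there is a legal game from `f` in which every vertex fires
exactly once. -/
theorem stmt5 [Nonempty V] (m : V → V → ℕ) (hsymm : ∀ u v, m u v = m v u)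
    (hloop : ∀ v, m v v = 0) (f : V → ℤ) (k : ℕ) (hk : 1 ≤ k) (L : List V)
    (hL : mgLegal m f L) (hcount : ∀ v : V, L.count v = k) :
    ∃ L' : List V, mgLegal m f L' ∧ ∀ v : V, L'.count v = 1 :=
  stmt5_general m hsymm f k hk L hL hcount
end

section
/- Let G be a multigraph and f a recurrent divisor on G. Then f is non-halting. -/
variable {V : Type*} [Fintype V] [DecidableEq V]

lemma mgPlay_append (m : V → V → ℕ) (f : V → ℤ) (L L' : List V) :
    mgPlay m f (L ++ L') = mgPlay m (mgPlay m f L) L' := by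
  simp [mgPlay, List.foldl_append]

lemma mgLegal_append_iff (m : V → V → ℕ) (f : V → ℤ) (L L' : List V) :
    mgLegal m f (L ++ L') ↔ mgLegal m f L ∧ mgLegal m (mgPlay m f L) L' := by
  induction L generalizing f with
  | nil => simp [mgLegal, mgPlay]
  | cons v L ih =>
    constructor
    · rintro ⟨h1, h2⟩
      have h2' := (ih (mgFire m f v)).mp h2
      exact ⟨⟨h1, h2'.1⟩, h2'.2⟩
    · rintro ⟨⟨h1, h2⟩, h3⟩
      exact ⟨h1, (ih _).mpr ⟨h2, h3⟩⟩

lemma mgFire_comm (m : V → V → ℕ) (f : V → ℤ) (u v : V) :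
    mgFire m (mgFire m f u) v = mgFire m (mgFire m f v) u := by
  by_cases huv : u = v
  · subst huv; rfl
  funext w
  simp only [mgFire]
  by_cases hwu : w = u <;> by_cases hwv : w = v <;>
    simp [hwu, hwv, huv, Ne.symm huv] <;> ring

lemma le_mgPlay_of_notMem (m : V → V → ℕ) (f : V → ℤ) {v : V} {A : List V}
    (h : v ∉ A) : f v ≤ mgPlay m f A v := by
  induction A generalizing f with
  | nil => exact le_refl _
  | cons u A ih =>
    simp only [List.mem_cons, not_or] at h
    refine le_trans ?_ (ih (mgFire m f u) h.2)
    simp only [mgFire, if_neg h.1]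
    exact le_add_of_nonneg_right (by positivity)

lemma mgSwap (m : V → V → ℕ) {f : V → ℤ} {v : V} (hv : (mgDeg m v : ℤ) ≤ f v)
    {A : List V} (hA : mgLegal m f A) (hnm : v ∉ A) :
    mgLegal m (mgFire m f v) A ∧
      mgPlay m (mgFire m f v) A = mgFire m (mgPlay m f A) v := by
  induction A generalizing f with
  | nil => exact ⟨trivial, rfl⟩
  | cons u A ih =>
    simp only [List.mem_cons, not_or] at hnm
    obtain ⟨hu, hA'⟩ := hA
    have huv : u ≠ v := fun h => hnm.1 h.symm
    have h1 : (mgDeg m u : ℤ) ≤ mgFire m f v u := by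
      simp only [mgFire, if_neg huv]
      exact le_trans hu (le_add_of_nonneg_right (by positivity))
    have hv' : (mgDeg m v : ℤ) ≤ mgFire m f u v := by
      simp only [mgFire, if_neg (Ne.symm huv)]
      exact le_trans hv (le_add_of_nonneg_right (by positivity))
    have key := ih (f := mgFire m f u) hv' hA' hnm.2
    refine ⟨⟨h1, ?_⟩, ?_⟩
    · show mgLegal m (mgFire m (mgFire m f v) u) A
      rw [← mgFire_comm]; exact key.1
    · show mgPlay m (mgFire m (mgFire m f v) u) A = _
      rw [← mgFire_comm]; exact key.2

lemma mem_of_active (m : V → V → ℕ) {f : V → ℤ} {v : V} (hv : (mgDeg m v : ℤ) ≤ f v)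
    {M : List V} (hst : mgStable m (mgPlay m f M)) : v ∈ M := by
  by_contra h
  exact absurd (hv.trans (le_mgPlay_of_notMem m f h)) (not_le.mpr (hst v))

lemma exists_mg_split {v : V} {M : List V} (h : v ∈ M) :
    ∃ A B, M = A ++ v :: B ∧ v ∉ A := by
  induction M with
  | nil => simp at h
  | cons w M ih =>
    by_cases hw : w = v
    · exact ⟨[], M, by simp [hw], by simp⟩
    · have hvM : v ∈ M := by
        rcases List.mem_cons.mp h with h' | h'
        · exact absurd h'.symm hw
        · exact h'
      obtain ⟨A, B, h1, h2⟩ := ih hvM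
      exact ⟨w :: A, B, by simp [h1], by simp only [List.mem_cons, not_or]; exact ⟨fun h' => hw h'.symm, h2⟩⟩

lemma mg_length_le (m : V → V → ℕ) :
    ∀ (L : List V) (f : V → ℤ) (M : List V), mgLegal m f L → mgLegal m f M →
      mgStable m (mgPlay m f M) → L.length ≤ M.length := by
  intro L
  induction L with
  | nil => simp
  | cons v L ih =>
    intro f M hL hM hst
    obtain ⟨hv, hL'⟩ := hL
    obtain ⟨A, B, rfl, hnA⟩ := exists_mg_split (mem_of_active m hv hst)
    rw [mgLegal_append_iff] at hM
    obtain ⟨hA, hact, hB⟩ := hM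
    obtain ⟨hA2, hplay⟩ := mgSwap m hv hA hnA
    have hM' : mgLegal m (mgFire m f v) (A ++ B) := by
      rw [mgLegal_append_iff]
      exact ⟨hA2, by rw [hplay]; exact hB⟩
    have hst' : mgStable m (mgPlay m (mgFire m f v) (A ++ B)) := by
      rw [mgPlay_append, hplay]
      rw [mgPlay_append] at hst
      exact hst
    have := ih (mgFire m f v) (A ++ B) hL' hM' hst'
    simp only [List.length_cons, List.length_append] at this ⊢
    omega

lemma mg_pump (m : V → V → ℕ) {f : V → ℤ} {L : List V} (hL : mgLegal m f L)
    (hfix : mgPlay m f L = f) :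
    ∀ k, ∃ P : List V, mgLegal m f P ∧ P.length = k * L.length ∧ mgPlay m f P = f := by
  intro k
  induction k with
  | zero => exact ⟨[], trivial, by simp, rfl⟩
  | succ k ih =>
    obtain ⟨P, h1, h2, h3⟩ := ih
    refine ⟨P ++ L, ?_, by simp [h2, Nat.succ_mul], by rw [mgPlay_append, h3, hfix]⟩
    rw [mgLegal_append_iff, h3]; exact ⟨h1, hL⟩

/-- A recurrent divisor is non-halting. -/
theorem stmt6 [Nonempty V] (m : V → V → ℕ) (hsymm : ∀ u v, m u v = m v u)
    (hloop : ∀ v, m v v = 0) (f : V → ℤ) (hrec : mgRecurrent m f) :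
    ¬ mgHalting m f := by
  rintro ⟨M, hM, hst⟩
  obtain ⟨L, hne, hL, hfix⟩ := hrec
  have hL1 : 1 ≤ L.length := List.length_pos_iff.mpr hne
  obtain ⟨P, h1, h2, _⟩ := mg_pump m hL hfix (M.length + 1)
  have hle := mg_length_le m P f M h1 hM hst
  have : M.length + 1 ≤ (M.length + 1) * L.length :=
    le_trans (by omega) (Nat.mul_le_mul_left _ hL1)
  omega
end
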